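/- arXiv:2501.03987 — 2 statements merged into one kernel-verified Lean document; each statement's English description precedes it below -/
import Mathlib

section
/- For the Nichols Hopf algebra K_m, and for r, s ∈ {0,1}, the space of K_m-module homomorphisms Hom_{K_m}(P_r, P_s) between the projective indecomposables has complex dimension 2^{m−1}. -/
/-- Generators of the Nichols Hopf algebra `K_m`: the group-like `K` and the
skew-primitives `ξ_1, …, ξ_m`. -/
inductive NGen (m : ℕ) : Type
  | K : NGen m
  | xi : Fin m → NGen m

open FreeAlgebra in
/-- The defining relations of the Nichols Hopf algebra `K_m`. -/
inductive NRel (m : ℕ) : FreeAlgebra ℂ (NGen m) → FreeAlgebra ℂ (NGen m) → Prop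
  | Ksq : NRel m (ι ℂ NGen.K * ι ℂ NGen.K) 1
  | xisq (i : Fin m) : NRel m (ι ℂ (NGen.xi i) * ι ℂ (NGen.xi i)) 0
  | Kxi (i : Fin m) : NRel m (ι ℂ NGen.K * ι ℂ (NGen.xi i)) (-(ι ℂ (NGen.xi i) * ι ℂ NGen.K))
  | xixj (i j : Fin m) (h : i ≠ j) :
      NRel m (ι ℂ (NGen.xi i) * ι ℂ (NGen.xi j)) (-(ι ℂ (NGen.xi j) * ι ℂ (NGen.xi i)))

/-- The Nichols Hopf algebra `K_m` as a `ℂ`-algebra. -/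
abbrev Km (m : ℕ) : Type := RingQuot (NRel m)

/-- The group-like generator `K` of `K_m`. -/
noncomputable def KmK (m : ℕ) : Km m :=
  RingQuot.mkAlgHom ℂ (NRel m) (FreeAlgebra.ι ℂ NGen.K)

/-- The generators `ξ_i` of `K_m`. -/
noncomputable def Kmxi (m : ℕ) (i : Fin m) : Km m :=
  RingQuot.mkAlgHom ℂ (NRel m) (FreeAlgebra.ι ℂ (NGen.xi i))

/-- The idempotents `e_r = (1 + (−1)^r K)/2` of `K_m`, `r ∈ ℤ/2ℤ`. -/
noncomputable def Kme (m : ℕ) (r : ZMod 2) : Km m :=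
  (2 : ℂ)⁻¹ • (1 + ((-1 : Km m)) ^ r.val * KmK m)

/-- The projective indecomposable left `K_m`-module `P_r = K_m · e_r`. -/
noncomputable def KmP (m : ℕ) (r : ZMod 2) : Submodule (Km m) (Km m) :=
  Submodule.span (Km m) {Kme m r}

noncomputable instance (m : ℕ) (s : ZMod 2) : SMulCommClass (Km m) ℂ (KmP m s) :=
  ⟨fun a c x => Subtype.ext (smul_comm a c (x : Km m))⟩

noncomputable instance (m : ℕ) (r s : ZMod 2) :
    AddCommGroup ((KmP m r) →ₗ[Km m] (KmP m s)) := by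
  exact @LinearMap.addCommGroup (Km m) (Km m) ↥(KmP m r) ↥(KmP m s) _ _ _ _ _ _ (RingHom.id _)

/-!
Evaluation at `e_r` identifies `Hom(P_r, P_s) = Hom(K_m e_r, K_m e_s)` with the corner
`e_r K_m e_s`. Since `K_m` is spanned by the monomials `ξ_S` and `K ξ_S`, and
`ξ_S e_s = e_{s + |S|} ξ_S`, the corner is spanned by the `e_r ξ_S` with `|S| ≡ r - s (mod 2)`.
These are linearly independent: `K_m` acts on the exterior algebra `⋀ ℂᵐ`, `ξ_i` by left
multiplication with the basis vector `vᵢ` and `K` by `(-1)^s` times the grade involution, and in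
this module `e_r ξ_S` sends `1` to the basis vector `v_S`. Exactly half of the `2^m` subsets of
`Fin m` have a given parity.
-/

section Corner

variable {k A : Type*} [CommSemiring k] [Semiring A] [Algebra k A] {e f : A}

lemma IsIdempotentElem.mul_eq_self_of_mem_span (hf : IsIdempotentElem f) {x : A}
    (hx : x ∈ Submodule.span A {f}) : x * f = x := by
  obtain ⟨a, rfl⟩ := Submodule.mem_span_singleton.1 hx
  rw [smul_eq_mul, mul_assoc, hf.eq]

lemma IsIdempotentElem.mem_range_mulLeftRight_iff (he : IsIdempotentElem e)
    (hf : IsIdempotentElem f) {x : A} :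
    x ∈ LinearMap.range (LinearMap.mulLeftRight k (e, f)) ↔ e * x = x ∧ x * f = x := by
  refine ⟨?_, fun h => ⟨x, by simp only [LinearMap.mulLeftRight_apply, h.1, h.2]⟩⟩
  rintro ⟨y, rfl⟩
  constructor
  · simp only [LinearMap.mulLeftRight_apply, ← mul_assoc, he.eq]
  · simp only [LinearMap.mulLeftRight_apply, mul_assoc, hf.eq]

lemma IsIdempotentElem.smul_apply_self (he : IsIdempotentElem e) {M : Type*} [AddCommMonoid M]
    [Module A M] (φ : Submodule.span A {e} →ₗ[A] M) :
    e • φ ⟨e, Submodule.mem_span_singleton_self e⟩ =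
      φ ⟨e, Submodule.mem_span_singleton_self e⟩ := by
  rw [← map_smul]
  exact congrArg φ (Subtype.ext he.eq)

def IsIdempotentElem.homSpanEquiv (he : IsIdempotentElem e) (hf : IsIdempotentElem f) :
    (Submodule.span A {e} →ₗ[A] Submodule.span A {f}) ≃ₗ[k]
      LinearMap.range (LinearMap.mulLeftRight k (e, f)) where
  toFun φ := ⟨φ ⟨e, Submodule.mem_span_singleton_self e⟩,
    (he.mem_range_mulLeftRight_iff hf).2 ⟨congrArg Subtype.val (he.smul_apply_self φ),
      hf.mul_eq_self_of_mem_span (Subtype.prop _)⟩⟩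
  map_add' φ ψ := rfl
  map_smul' c φ := rfl
  invFun y := (LinearMap.toSpanSingleton A A (y : A)).restrict fun x _ =>
    Submodule.mem_span_singleton.2 ⟨x * y, by
      rw [smul_eq_mul, mul_assoc, ((he.mem_range_mulLeftRight_iff hf).1 y.2).2,
        LinearMap.toSpanSingleton_apply, smul_eq_mul]⟩
  left_inv φ := by
    ext ⟨x, hx⟩
    obtain ⟨a, rfl⟩ := Submodule.mem_span_singleton.1 hx
    have hae : (⟨a • e, hx⟩ : Submodule.span A {e}) =
        a • ⟨e, Submodule.mem_span_singleton_self e⟩ := rfl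
    rw [hae, map_smul, map_smul]
    exact congrArg (a * ·) (congrArg Subtype.val (he.smul_apply_self φ))
  right_inv y := Subtype.ext ((he.mem_range_mulLeftRight_iff hf).1 y.2).1

end Corner

lemma Submodule.span_eq_top_of_mul_mem {R A : Type*} [CommSemiring R] [Semiring A]
    [Algebra R A] {s t : Set A} (hs : Algebra.adjoin R s = ⊤) (h1 : (1 : A) ∈ span R t)
    (hmul : ∀ a ∈ s, ∀ x ∈ t, a * x ∈ span R t) : span R t = ⊤ := by
  have hstable (a : A) : span R t ≤ (span R t).comap (LinearMap.mulLeft R a) := by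
    have ha : a ∈ Algebra.adjoin R s := hs ▸ Algebra.mem_top
    induction ha using Algebra.adjoin_induction with
    | mem a ha => exact span_le.2 (hmul a ha)
    | algebraMap r =>
      intro x hx
      simpa [Algebra.algebraMap_eq_smul_one] using smul_mem _ r hx
    | add a b _ _ ha hb =>
      intro x hx
      show (a + b) * x ∈ span R t
      rw [add_mul]
      exact add_mem (ha hx) (hb hx)
    | mul a b _ _ ha hb =>
      intro x hx
      simpa [mul_assoc] using ha (hb hx)
  refine eq_top_iff.2 fun a _ => ?_
  simpa using hstable a h1

lemma RingQuot.adjoin_range_mkAlgHom_ι {R X : Type*} [CommSemiring R]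
    (rel : FreeAlgebra R X → FreeAlgebra R X → Prop) :
    Algebra.adjoin R (Set.range (RingQuot.mkAlgHom R rel ∘ FreeAlgebra.ι R)) = ⊤ := by
  rw [Set.range_comp, Algebra.adjoin_image, FreeAlgebra.adjoin_range_ι, Algebra.map_top,
    AlgHom.range_eq_top]
  exact RingQuot.mkAlgHom_surjective R rel

section Parity

lemma ZMod.two_cases : ∀ r : ZMod 2, r = 0 ∨ r = 1 := by decide

lemma ZMod.even_val_add_val_add_of_eq_sub {r t : ZMod 2} {n : ℕ} (h : (n : ZMod 2) = r - t) :
    Even (r.val + t.val + n) := by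
  rw [← ZMod.natCast_eq_zero_iff_even]
  push_cast
  rw [ZMod.natCast_zmod_val, ZMod.natCast_zmod_val, h]
  clear h
  revert r t
  decide

lemma Finset.natCast_card_symmDiff_singleton {α : Type*} [DecidableEq α] (s : Finset α)
    (a : α) : ((symmDiff s {a}).card : ZMod 2) = s.card + 1 := by
  by_cases h : a ∈ s
  · have hs : symmDiff s {a} = s.erase a := by
      ext x
      by_cases hx : x = a <;> simp [Finset.mem_symmDiff, hx, h]
    rw [hs, ← Finset.card_erase_add_one h, Nat.cast_add, Nat.cast_one, add_assoc,
      CharTwo.add_self_eq_zero, add_zero]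
  · have hs : symmDiff s {a} = insert a s := by
      ext x
      by_cases hx : x = a <;> simp [Finset.mem_symmDiff, hx, h]
    rw [hs, Finset.card_insert_of_notMem h, Nat.cast_add, Nat.cast_one]

/-- Toggling a fixed element `a` swaps the subsets of the two parities. -/
lemma Fintype.card_finset_with_card_parity {α : Type*} [Fintype α] [DecidableEq α]
    [Nonempty α] (p : ZMod 2) :
    Fintype.card {s : Finset α // (s.card : ZMod 2) = p} = 2 ^ (Fintype.card α - 1) := by
  obtain ⟨a⟩ := ‹Nonempty α›
  have hswap : {s : Finset α // (s.card : ZMod 2) = p} ≃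
      {s : Finset α // (s.card : ZMod 2) ≠ p} :=
    Equiv.subtypeEquiv ⟨(symmDiff · {a}), (symmDiff · {a}),
      fun s => symmDiff_symmDiff_cancel_right {a} s,
      fun s => symmDiff_symmDiff_cancel_right {a} s⟩ fun s => by
        simp only [Equiv.coe_fn_mk, Finset.natCast_card_symmDiff_singleton]
        generalize (s.card : ZMod 2) = x
        revert x p
        decide
  have hsum := Fintype.card_congr (Equiv.sumCompl fun s : Finset α => (s.card : ZMod 2) = p)
  rw [Fintype.card_sum, ← Fintype.card_congr hswap, Fintype.card_finset] at hsum
  obtain ⟨n, hn⟩ := Nat.exists_eq_succ_of_ne_zero (Fintype.card_ne_zero (α := α))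
  rw [hn, pow_succ] at hsum
  rw [hn, Nat.succ_sub_one]
  omega

end Parity

section OrderedProd

variable {ι A : Type*} [LinearOrder ι]

def Finset.orderedProd [Monoid A] (x : ι → A) (S : Finset ι) : A :=
  ((S.sort (· ≤ ·)).map x).prod

@[simp] lemma Finset.orderedProd_empty [Monoid A] (x : ι → A) :
    (∅ : Finset ι).orderedProd x = 1 := by
  simp [Finset.orderedProd]

@[simp] lemma Finset.orderedProd_singleton [Monoid A] (x : ι → A) (i : ι) :
    ({i} : Finset ι).orderedProd x = x i := by
  simp [Finset.orderedProd]

lemma Finset.orderedProd_insert_of_lt [Monoid A] (x : ι → A) {i : ι} {S : Finset ι}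
    (h : ∀ j ∈ S, i < j) : (insert i S).orderedProd x = x i * S.orderedProd x := by
  rw [Finset.orderedProd, Finset.sort_insert _ (fun j hj => (h j hj).le)
    fun hi => lt_irrefl i (h i hi)]
  rfl

lemma Finset.map_orderedProd {B F : Type*} [Monoid A] [Monoid B] [FunLike F A B]
    [MonoidHomClass F A B] (f : F) (x : ι → A) (S : Finset ι) :
    f (S.orderedProd x) = S.orderedProd (f ∘ x) := by
  simp [Finset.orderedProd, map_list_prod, List.map_map]

lemma Finset.exists_mul_orderedProd [Ring A] {x : ι → A} (hsq : ∀ i, x i * x i = 0)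
    (hanti : ∀ i j, i ≠ j → x i * x j = -(x j * x i)) (i : ι) (S : Finset ι) :
    ∃ c : ℤ, x i * S.orderedProd x = c • (insert i S).orderedProd x := by
  induction S using Finset.induction_on_min generalizing i with
  | empty => exact ⟨1, by simp⟩
  | insert a S ha ih =>
    rcases lt_trichotomy i a with hia | rfl | hai
    · refine ⟨1, ?_⟩
      rw [one_smul, Finset.orderedProd_insert_of_lt x (S := insert a S)]
      simpa using ⟨hia, fun j hj => hia.trans (ha j hj)⟩
    · refine ⟨0, ?_⟩
      rw [Finset.orderedProd_insert_of_lt x ha, ← mul_assoc, hsq, zero_mul, zero_smul]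
    · obtain ⟨c, hc⟩ := ih i
      refine ⟨-c, ?_⟩
      have ha' : ∀ j ∈ insert i S, a < j := by simpa using ⟨hai, ha⟩
      rw [Finset.orderedProd_insert_of_lt x ha, ← mul_assoc, hanti i a hai.ne', neg_mul,
        mul_assoc, hc, Finset.insert_comm, Finset.orderedProd_insert_of_lt x ha', mul_smul_comm,
        neg_smul]

end OrderedProd

section ExteriorAlgebra

variable {R M I : Type*} [CommRing R] [AddCommGroup M] [Module R M] [LinearOrder I]

lemma ExteriorAlgebra.basis_eq_orderedProd (b : Module.Basis I R M) (S : Finset I) :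
    b.ExteriorAlgebra S = S.orderedProd (ι R ∘ b) := by
  have hsort : List.ofFn (S.orderEmbOfFin rfl) = S.sort (· ≤ ·) :=
    List.ext_getElem (by simp) fun i _ _ => by simp [Finset.orderEmbOfFin_apply]
  rw [ExteriorAlgebra.basis_apply_ofCard b rfl, ιMulti_family, ιMulti_apply,
    Set.powersetCard.ofFinEmbEquiv_symm_apply, Finset.orderedProd, ← hsort, List.map_ofFn]
  rfl

lemma ExteriorAlgebra.involute_basis (b : Module.Basis I R M) (S : Finset I) :
    CliffordAlgebra.involute (b.ExteriorAlgebra S) = (-1 : R) ^ S.card • b.ExteriorAlgebra S := by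
  rw [basis_eq_orderedProd, Finset.orderedProd, ← List.map_map,
    CliffordAlgebra.involute_prod_map_ι]
  simp

end ExteriorAlgebra

section Relations

variable {m : ℕ}

lemma KmK_mul_self : KmK m * KmK m = 1 := by
  simpa [KmK] using RingQuot.mkAlgHom_rel ℂ (NRel.Ksq (m := m))

lemma Kmxi_mul_self (i : Fin m) : Kmxi m i * Kmxi m i = 0 := by
  simpa [Kmxi] using RingQuot.mkAlgHom_rel ℂ (NRel.xisq (m := m) i)

lemma KmK_mul_Kmxi (i : Fin m) : KmK m * Kmxi m i = -(Kmxi m i * KmK m) := by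
  simpa [KmK, Kmxi] using RingQuot.mkAlgHom_rel ℂ (NRel.Kxi (m := m) i)

lemma Kmxi_mul_Kmxi {i j : Fin m} (h : i ≠ j) :
    Kmxi m i * Kmxi m j = -(Kmxi m j * Kmxi m i) := by
  simpa [Kmxi] using RingQuot.mkAlgHom_rel ℂ (NRel.xixj (m := m) i j h)

lemma Kme_zero : Kme m 0 = (2 : ℂ)⁻¹ • (1 + KmK m) := by simp [Kme]

lemma Kme_one : Kme m 1 = (2 : ℂ)⁻¹ • (1 - KmK m) := by
  rw [Kme, show (1 : ZMod 2).val = 1 from rfl, pow_one, sub_eq_add_neg]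
  congr 2
  exact neg_one_mul (KmK m)

lemma Kme_mul_Kme (r t : ZMod 2) : Kme m r * Kme m t = if r = t then Kme m r else 0 := by
  rcases r.two_cases with rfl | rfl <;> rcases t.two_cases with rfl | rfl <;>
    simp [Kme_zero, Kme_one, mul_add, add_mul, mul_sub, sub_mul, KmK_mul_self] <;> module

lemma isIdempotentElem_Kme (r : ZMod 2) : IsIdempotentElem (Kme m r) := by
  have h := Kme_mul_Kme (m := m) r r
  rwa [if_pos rfl] at h

lemma Kme_mul_KmK (r : ZMod 2) : Kme m r * KmK m = (-1 : ℂ) ^ r.val • Kme m r := by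
  rcases r.two_cases with rfl | rfl
  · simp [Kme_zero, add_mul, KmK_mul_self, add_comm]
  · simp [Kme_one, sub_mul, KmK_mul_self, show (1 : ZMod 2).val = 1 from rfl]
    module

lemma Kmxi_mul_Kme (i : Fin m) (t : ZMod 2) :
    Kmxi m i * Kme m t = Kme m (t + 1) * Kmxi m i := by
  rcases t.two_cases with rfl | rfl
  · simp [Kme_zero, Kme_one, mul_add, sub_mul, KmK_mul_Kmxi]
  · simp [show (1 : ZMod 2) + 1 = 0 from rfl, Kme_zero, Kme_one, mul_sub, add_mul, KmK_mul_Kmxi]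
    module

lemma orderedProd_Kmxi_mul_Kme (S : Finset (Fin m)) (t : ZMod 2) :
    S.orderedProd (Kmxi m) * Kme m t = Kme m (t + S.card) * S.orderedProd (Kmxi m) := by
  rw [Finset.orderedProd, ← Finset.length_sort (· ≤ ·)]
  induction S.sort (· ≤ ·) generalizing t with
  | nil => simp
  | cons i l ih =>
    rw [List.map_cons, List.prod_cons, mul_assoc, ih, ← mul_assoc, Kmxi_mul_Kme, mul_assoc,
      List.length_cons, Nat.cast_succ, add_assoc]

end Relations

section Spanning

variable {m : ℕ}

lemma span_orderedProd_Kmxi : Submodule.span ℂ (Set.range (Finset.orderedProd (Kmxi m)) ∪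
    Set.range (KmK m * Finset.orderedProd (Kmxi m) ·)) = ⊤ := by
  refine Submodule.span_eq_top_of_mul_mem (RingQuot.adjoin_range_mkAlgHom_ι (NRel m))
    (Submodule.subset_span (Or.inl ⟨∅, by simp⟩)) ?_
  set T := Set.range (Finset.orderedProd (Kmxi m)) ∪
    Set.range (KmK m * Finset.orderedProd (Kmxi m) ·)
  have mem_left (S : Finset (Fin m)) : S.orderedProd (Kmxi m) ∈ Submodule.span ℂ T :=
    Submodule.subset_span (Or.inl ⟨S, rfl⟩)
  have mem_right (S : Finset (Fin m)) : KmK m * S.orderedProd (Kmxi m) ∈ Submodule.span ℂ T :=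
    Submodule.subset_span (Or.inr ⟨S, rfl⟩)
  rintro _ ⟨g, rfl⟩ _ hx
  cases g with
  | K =>
    change KmK m * _ ∈ _
    rcases hx with ⟨S, rfl⟩ | ⟨S, rfl⟩
    · exact mem_right S
    · simpa only [← mul_assoc, KmK_mul_self, one_mul] using mem_left S
  | xi i =>
    change Kmxi m i * _ ∈ _
    have hmul (S : Finset (Fin m)) := Finset.exists_mul_orderedProd Kmxi_mul_self
      (fun i j h => Kmxi_mul_Kmxi h) i S
    rcases hx with ⟨S, rfl⟩ | ⟨S, rfl⟩ <;> obtain ⟨c, hc⟩ := hmul S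
    · rw [hc]
      exact zsmul_mem (mem_left _) c
    · rw [← mul_assoc, ← neg_neg (Kmxi m i * KmK m), ← KmK_mul_Kmxi, neg_mul, mul_assoc, hc,
        mul_smul_comm]
      exact neg_mem (zsmul_mem (mem_right _) c)

end Spanning

section ExteriorRep

open ExteriorAlgebra

variable {m : ℕ}

noncomputable def exteriorGenAction (m : ℕ) (t : ZMod 2) :
    NGen m → Module.End ℂ (ExteriorAlgebra ℂ (Fin m → ℂ))
  | NGen.K => (-1 : ℂ) ^ t.val • CliffordAlgebra.involute.toLinearMap
  | NGen.xi i => Algebra.lmul ℂ _ (ι ℂ (Pi.basisFun ℂ (Fin m) i))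

noncomputable def exteriorRep (m : ℕ) (t : ZMod 2) :
    Km m →ₐ[ℂ] Module.End ℂ (ExteriorAlgebra ℂ (Fin m → ℂ)) :=
  RingQuot.liftAlgHom ℂ ⟨FreeAlgebra.lift ℂ (exteriorGenAction m t), by
    intro x y h
    induction h with
    | Ksq => ext; simp [exteriorGenAction, smul_smul, ← pow_add]
    | xisq i =>
      simp only [map_mul, FreeAlgebra.lift_ι_apply, exteriorGenAction, map_zero]
      rw [← map_mul, ι_sq_zero, map_zero]
    | Kxi i => ext; simp [exteriorGenAction]
    | xixj i j hij =>
      simp only [map_mul, map_neg, FreeAlgebra.lift_ι_apply, exteriorGenAction]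
      rw [eq_neg_iff_add_eq_zero, ← map_mul (Algebra.lmul ℂ _),
        ← map_mul (Algebra.lmul ℂ _), ← map_add, ι_add_mul_swap, map_zero]⟩

@[simp] lemma exteriorRep_KmK (t : ZMod 2) :
    exteriorRep m t (KmK m) = (-1 : ℂ) ^ t.val • CliffordAlgebra.involute.toLinearMap := by
  simp [exteriorRep, KmK, exteriorGenAction]

@[simp] lemma exteriorRep_Kmxi (t : ZMod 2) (i : Fin m) :
    exteriorRep m t (Kmxi m i) = Algebra.lmul ℂ _ (ι ℂ (Pi.basisFun ℂ (Fin m) i)) := by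
  simp [exteriorRep, Kmxi, exteriorGenAction]

lemma exteriorRep_orderedProd_apply_one (t : ZMod 2) (S : Finset (Fin m)) :
    exteriorRep m t (S.orderedProd (Kmxi m)) 1 = (Pi.basisFun ℂ (Fin m)).ExteriorAlgebra S := by
  have hgen :
      exteriorRep m t ∘ Kmxi m = Algebra.lmul ℂ _ ∘ (ι ℂ ∘ Pi.basisFun ℂ (Fin m)) :=
    funext (exteriorRep_Kmxi t)
  rw [Finset.map_orderedProd, hgen, ← Finset.map_orderedProd, basis_eq_orderedProd]
  exact mul_one _

lemma exteriorRep_Kme_mul_orderedProd_apply_one {r t : ZMod 2} {S : Finset (Fin m)}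
    (hS : (S.card : ZMod 2) = r - t) :
    exteriorRep m t (Kme m r * S.orderedProd (Kmxi m)) 1 =
      (Pi.basisFun ℂ (Fin m)).ExteriorAlgebra S := by
  have hsign : (-1 : ℂ) ^ r.val * ((-1) ^ t.val * (-1) ^ S.card) = 1 := by
    rw [← pow_add, ← pow_add, ← add_assoc,
      (ZMod.even_val_add_val_add_of_eq_sub hS).neg_one_pow]
  have hneg_one_pow (n : ℕ) (y : ExteriorAlgebra ℂ (Fin m → ℂ)) :
      ((-1 : Module.End ℂ _) ^ n) y = (-1 : ℂ) ^ n • y := by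
    rw [← map_one (algebraMap ℂ (Module.End ℂ _)), ← map_neg, ← map_pow,
      Module.algebraMap_end_apply]
  rw [map_mul, Module.End.mul_apply, exteriorRep_orderedProd_apply_one, Kme]
  simp only [map_smul, map_add, map_mul, map_pow, map_neg, map_one, exteriorRep_KmK,
    LinearMap.smul_apply, LinearMap.add_apply, Module.End.mul_apply, Module.End.one_apply,
    AlgHom.toLinearMap_apply, involute_basis, hneg_one_pow, smul_smul]
  rw [hsign, one_smul, ← two_smul ℂ, smul_smul, inv_mul_cancel₀ two_ne_zero, one_smul]

end ExteriorRep

section CornerBasis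

variable {m : ℕ}

lemma Kme_mul_orderedProd_Kmxi_mul_Kme (r s : ZMod 2) (S : Finset (Fin m)) :
    Kme m r * S.orderedProd (Kmxi m) * Kme m s =
      if (S.card : ZMod 2) = r - s then Kme m r * S.orderedProd (Kmxi m) else 0 := by
  rw [mul_assoc, orderedProd_Kmxi_mul_Kme, ← mul_assoc, Kme_mul_Kme]
  simp only [eq_sub_iff_add_eq, add_comm _ s, eq_comm (a := r), ite_mul, zero_mul]

lemma range_mulLeftRight_Kme (r s : ZMod 2) :
    LinearMap.range (LinearMap.mulLeftRight ℂ (Kme m r, Kme m s)) =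
      Submodule.span ℂ (Set.range fun S : {S : Finset (Fin m) // (S.card : ZMod 2) = r - s} =>
        Kme m r * S.1.orderedProd (Kmxi m)) := by
  have corner_mem (S : Finset (Fin m)) : Kme m r * S.orderedProd (Kmxi m) * Kme m s ∈
      Submodule.span ℂ (Set.range fun S : {S : Finset (Fin m) // (S.card : ZMod 2) = r - s} =>
        Kme m r * S.1.orderedProd (Kmxi m)) := by
    rw [Kme_mul_orderedProd_Kmxi_mul_Kme]
    split_ifs with hS
    · exact Submodule.subset_span ⟨⟨S, hS⟩, rfl⟩
    · exact zero_mem _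
  apply le_antisymm
  · rw [LinearMap.range_eq_map, ← span_orderedProd_Kmxi, Submodule.map_span, Submodule.span_le]
    rintro _ ⟨_, ⟨S, rfl⟩ | ⟨S, rfl⟩, rfl⟩
    · exact corner_mem S
    · rw [LinearMap.mulLeftRight_apply, ← mul_assoc, Kme_mul_KmK, smul_mul_assoc, smul_mul_assoc]
      exact Submodule.smul_mem _ _ (corner_mem S)
  · rw [Submodule.span_le]
    rintro _ ⟨⟨S, hS⟩, rfl⟩
    exact ⟨S.orderedProd (Kmxi m), by
      rw [LinearMap.mulLeftRight_apply, Kme_mul_orderedProd_Kmxi_mul_Kme, if_pos hS]⟩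

lemma linearIndependent_Kme_mul_orderedProd_Kmxi (r s : ZMod 2) :
    LinearIndependent ℂ fun S : {S : Finset (Fin m) // (S.card : ZMod 2) = r - s} =>
      Kme m r * S.1.orderedProd (Kmxi m) := by
  refine LinearIndependent.of_comp (LinearMap.applyₗ 1 ∘ₗ (exteriorRep m s).toLinearMap) ?_
  have hbasis : (LinearMap.applyₗ 1 ∘ₗ (exteriorRep m s).toLinearMap) ∘
      (fun S : {S : Finset (Fin m) // (S.card : ZMod 2) = r - s} =>
        Kme m r * S.1.orderedProd (Kmxi m)) =
      (Pi.basisFun ℂ (Fin m)).ExteriorAlgebra ∘ Subtype.val :=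
    funext fun S => exteriorRep_Kme_mul_orderedProd_apply_one S.2
  rw [hbasis]
  exact (Pi.basisFun ℂ (Fin m)).ExteriorAlgebra.linearIndependent.comp _ Subtype.val_injective

end CornerBasis

/-- for `r, s ∈ ℤ/2ℤ`, the space `Hom_{K_m}(P_r, P_s)` of `K_m`-module
homomorphisms between the projective indecomposables has complex dimension `2^(m−1)`. -/
theorem Km_hom_finrank (m : ℕ) (hm : 1 ≤ m) (r s : ZMod 2) :
    Module.finrank ℂ ((KmP m r) →ₗ[Km m] (KmP m s)) = 2 ^ (m - 1) := by
  have : Nonempty (Fin m) := ⟨⟨0, hm⟩⟩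
  calc Module.finrank ℂ ((KmP m r) →ₗ[Km m] (KmP m s))
      = Module.finrank ℂ (LinearMap.range (LinearMap.mulLeftRight ℂ (Kme m r, Kme m s))) :=
        ((isIdempotentElem_Kme r).homSpanEquiv (isIdempotentElem_Kme s)).finrank_eq
    _ = Fintype.card {S : Finset (Fin m) // (S.card : ZMod 2) = r - s} := by
        rw [range_mulLeftRight_Kme,
          finrank_span_eq_card (linearIndependent_Kme_mul_orderedProd_Kmxi r s)]
    _ = 2 ^ (m - 1) := by rw [Fintype.card_finset_with_card_parity, Fintype.card_fin]
end

section
/- Let X be an object quasi-dominated by simple objects via morphisms α_{i,m}: X_i → X and β_{i,m}: X → X_i, and suppose that β_{j,m'}∘α_{i,m} = 0 for all pairs of indices. Then the identity morphism of X is negligible, i.e., tr(h) = 0 for every endomorphism h of X; hence X is a negligible object. -/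
open CategoryTheory

/-- if `X` is quasi-dominated by simple objects via `α_i : X_i → X`,
`β_i : X → X_i`, and all composites `β_j ∘ α_i` vanish, then the identity of `X` is
negligible: `tr(h) = 0` for every endomorphism `h` of `X`; hence `X` is negligible. -/
theorem negligible_of_orthogonal (C : Type*) [Category C] [Preadditive C] [Linear ℂ C]
    (tr : ∀ X : C, (X ⟶ X) → ℂ)
    (hcyc : ∀ {X Y : C} (f : X ⟶ Y) (g : Y ⟶ X), tr X (f ≫ g) = tr Y (g ≫ f))
    (X : C) (I : Type) [Fintype I] (Xi : I → C)
    (hsimple : ∀ i, Simple (Xi i))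
    (α : ∀ i, Xi i ⟶ X) (β : ∀ i, X ⟶ Xi i)
    (hneg : ∀ h : X ⟶ X, tr X ((𝟙 X - ∑ i : I, β i ≫ α i) ≫ h) = 0)
    (horth : ∀ i j, α i ≫ β j = 0) :
    ∀ h : X ⟶ X, tr X h = 0 := by
  intro h
  set p : X ⟶ X := ∑ i : I, β i ≫ α i with hpdef
  have hp2 : p ≫ p = 0 := by
    rw [hpdef, Preadditive.sum_comp]
    apply Finset.sum_eq_zero
    intro i _
    rw [Preadditive.comp_sum]
    apply Finset.sum_eq_zero
    intro j _
    rw [Category.assoc, ← Category.assoc (α i), horth, Limits.zero_comp, Limits.comp_zero]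
  have key : (𝟙 X - p) ≫ ((𝟙 X + p) ≫ h) = h := by
    rw [← Category.assoc]
    simp [Preadditive.sub_comp, Preadditive.comp_add, hp2]
  have := hneg ((𝟙 X + p) ≫ h)
  rwa [key] at this
end
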